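/- For n ≥ 4, the gp-chromatic number of the Cartesian product P_4 □ P_n equals n + 1. -/

import Mathlib

open SimpleGraph

/-- A set `S` is in general position: no shortest path contains more than two vertices of `S`. -/
def IsGenPosSet {V : Type*} (G : SimpleGraph V) (S : Set V) : Prop :=
  ∀ ⦃u v : V⦄ (p : G.Walk u v), p.IsPath → p.length = G.dist u v →
    ∀ x y z, x ∈ S → y ∈ S → z ∈ S →
      x ∈ p.support → y ∈ p.support → z ∈ p.support →
      x = y ∨ y = z ∨ x = z

/-- `G` can be coloured with `k` colours so that every colour class is in general position. -/
def GpColorable {V : Type*} (G : SimpleGraph V) (k : ℕ) : Prop :=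
  ∃ c : V → Fin k, ∀ i, IsGenPosSet G {v | c v = i}

/-- The gp-chromatic number: least number of colours in a colouring whose classes are
general position sets. -/
noncomputable def gpChromatic {V : Type*} (G : SimpleGraph V) : ℕ :=
  sInf {k | GpColorable G k}

/-!
On a shortest path the distances to its start embed the path isometrically into `ℕ`, so a set
is in general position exactly when none of its vertices is metrically between two others. In
the grid `P_m □ P_n` the distance is the `ℓ¹` distance, so "between" means lying in the box
spanned by the two others, i.e. in their order interval `[[x, z]]` in `Fin m × Fin n`.

If a between-free set has two points `x`, `y` in one row, all its other points lie strictly between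
them in the column; of three such points two lie on the same side of that row, and the nearer
one is in the box spanned by the farther one and `x` or `y`. Otherwise it has at most one point
per row. So in four rows a between-free set has at most `4` points, and if it contains the corner
`(0, 0)`, its other points form an antichain, of which at most two fit. Counting the `4n`
vertices therefore needs `n + 1` colours, and a cyclic colouring of the rows attains this.
-/

def IsBetweenFree {α : Type*} [Lattice α] (S : Set α) : Prop :=
  ∀ x ∈ S, ∀ y ∈ S, ∀ z ∈ S, y ∈ Set.uIcc x z → x = y ∨ y = z ∨ x = z

section Lattice

variable {α : Type*} [Lattice α] {S T : Set α}

lemma IsBetweenFree.notMem_uIcc (hS : IsBetweenFree S) {x y z : α} (hx : x ∈ S) (hy : y ∈ S)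
    (hz : z ∈ S) (hxy : x ≠ y) (hyz : y ≠ z) (hxz : x ≠ z) : y ∉ Set.uIcc x z := fun h ↦ by
  rcases hS x hx y hy z hz h with h | h | h <;> contradiction

lemma IsBetweenFree.mono (hS : IsBetweenFree S) (hTS : T ⊆ S) : IsBetweenFree T :=
  fun x hx y hy z hz ↦ hS x (hTS hx) y (hTS hy) z (hTS hz)

end Lattice

section LinearOrder

variable {α β : Type*} [LinearOrder α] [LinearOrder β]

lemma mem_uIcc_or_mem_uIcc_or_mem_uIcc (a b c : α) :
    b ∈ Set.uIcc a c ∨ a ∈ Set.uIcc b c ∨ c ∈ Set.uIcc a b := by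
  simp only [Set.mem_uIcc]
  grind

lemma mem_uIcc_of_three_of_pivot (x a b c : α) :
    (a ∈ Set.uIcc x b ∨ b ∈ Set.uIcc x a) ∨ (a ∈ Set.uIcc x c ∨ c ∈ Set.uIcc x a) ∨
      (b ∈ Set.uIcc x c ∨ c ∈ Set.uIcc x b) := by
  simp only [Set.mem_uIcc]
  grind

lemma Nat.dist_add_dist_eq_iff {a b c : ℕ} :
    a.dist b + b.dist c = a.dist c ↔ b ∈ Set.uIcc a c := by
  rw [Set.mem_uIcc]
  unfold Nat.dist
  omega

lemma IsAntichain.mem_uIcc_of_fst_mem_uIcc {S : Set (α × β)} (hS : IsAntichain (· ≤ ·) S)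
    {p q r : α × β} (hp : p ∈ S) (hq : q ∈ S) (hr : r ∈ S) (hpq : p ≠ q) (hqr : q ≠ r)
    (h : q.1 ∈ Set.uIcc p.1 r.1) : q ∈ Set.uIcc p r := by
  have hpq' : ¬p ≤ q := hS hp hq hpq
  have hqp' : ¬q ≤ p := hS hq hp hpq.symm
  have hqr' : ¬q ≤ r := hS hq hr hqr
  have hrq' : ¬r ≤ q := hS hr hq hqr.symm
  simp only [Set.uIcc_prod_eq, Set.mem_prod, Set.mem_uIcc, Prod.le_def, not_and_or, not_le]
    at h hpq' hqp' hqr' hrq' ⊢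
  grind

lemma IsBetweenFree.card_le_two_of_isAntichain {s : Finset (α × β)}
    (hs : IsBetweenFree (s : Set (α × β))) (hanti : IsAntichain (· ≤ ·) (s : Set (α × β))) :
    s.card ≤ 2 := by
  by_contra! h
  obtain ⟨p, hp, q, hq, r, hr, hpq, hpr, hqr⟩ := Finset.two_lt_card.1 h
  rcases mem_uIcc_or_mem_uIcc_or_mem_uIcc p.1 q.1 r.1 with hm | hm | hm
  · exact hs.notMem_uIcc hp hq hr hpq hqr hpr
      (hanti.mem_uIcc_of_fst_mem_uIcc hp hq hr hpq hqr hm)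
  · exact hs.notMem_uIcc hq hp hr hpq.symm hpr hqr
      (hanti.mem_uIcc_of_fst_mem_uIcc hq hp hr hpq.symm hpr hm)
  · exact hs.notMem_uIcc hp hr hq hpr hqr.symm hpq
      (hanti.mem_uIcc_of_fst_mem_uIcc hp hr hq hpr hqr.symm hm)

lemma IsBetweenFree.card_le_three_of_mem_lowerBounds {s : Finset (α × β)}
    (hs : IsBetweenFree (s : Set (α × β))) {o : α × β} (ho : o ∈ s)
    (hlow : o ∈ lowerBounds (s : Set (α × β))) : s.card ≤ 3 := by
  have hanti : IsAntichain (· ≤ ·) ((s.erase o : Finset (α × β)) : Set (α × β)) := by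
    intro p hp q hq hpq hle
    simp only [Finset.mem_coe, Finset.mem_erase] at hp hq
    exact hs.notMem_uIcc ho hp.2 hq.2 (Ne.symm hp.1) hpq (Ne.symm hq.1)
      (Set.Icc_subset_uIcc ⟨hlow hp.2, hle⟩)
  have := (hs.mono (Finset.coe_subset.2 (s.erase_subset o))).card_le_two_of_isAntichain hanti
  have := Finset.card_erase_add_one ho
  omega

lemma IsBetweenFree.card_le_four_of_fst_eq {s : Finset (α × β)}
    (hs : IsBetweenFree (s : Set (α × β))) {x y : α × β} (hx : x ∈ s) (hy : y ∈ s)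
    (hxy : x ≠ y) (hfst : x.1 = y.1) : s.card ≤ 4 := by
  wlog hlt : x.2 < y.2 generalizing x y
  · exact this hy hx hxy.symm hfst.symm
      ((not_lt.1 hlt).lt_of_ne fun h ↦ hxy (Prod.ext hfst h.symm))
  set t := (s.erase x).erase y
  have ht : ∀ {p}, p ∈ t → p ∈ s ∧ p ≠ x ∧ p ≠ y := fun hp ↦ by
    simp only [t, Finset.mem_erase] at hp
    exact ⟨hp.2.2, hp.2.1, hp.1⟩
  have hsnd : ∀ {p}, p ∈ t → x.2 < p.2 ∧ p.2 < y.2 := fun hp ↦ by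
    obtain ⟨hps, hpx, hpy⟩ := ht hp
    refine ⟨lt_of_not_ge fun hle ↦ hs.notMem_uIcc hps hx hy hpx hxy hpy ?_,
      lt_of_not_ge fun hle ↦ hs.notMem_uIcc hx hy hps hxy hpy.symm hpx.symm ?_⟩
    · rw [Set.uIcc_prod_eq]
      exact ⟨hfst ▸ Set.right_mem_uIcc, Set.mem_uIcc_of_le hle hlt.le⟩
    · rw [Set.uIcc_prod_eq]
      exact ⟨hfst ▸ Set.left_mem_uIcc, Set.mem_uIcc_of_le hlt.le hle⟩
  have hside : ∀ {p q}, p ∈ t → q ∈ t → p ≠ q → p.1 ∉ Set.uIcc x.1 q.1 := by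
    intro p q hp hq hpq h
    obtain ⟨hps, hpx, hpy⟩ := ht hp
    obtain ⟨hqs, hqx, hqy⟩ := ht hq
    rcases le_total p.2 q.2 with hle | hle
    · refine hs.notMem_uIcc hx hps hqs hpx.symm hpq hqx.symm ?_
      rw [Set.uIcc_prod_eq]
      exact ⟨h, Set.mem_uIcc_of_le (hsnd hp).1.le hle⟩
    · refine hs.notMem_uIcc hy hps hqs hpy.symm hpq hqy.symm ?_
      rw [Set.uIcc_prod_eq]
      exact ⟨hfst ▸ h, Set.mem_uIcc_of_ge hle (hsnd hp).2.le⟩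
  have htcard : t.card ≤ 2 := by
    by_contra! h
    obtain ⟨p, hp, q, hq, r, hr, hpq, hpr, hqr⟩ := Finset.two_lt_card.1 h
    rcases mem_uIcc_of_three_of_pivot x.1 p.1 q.1 r.1 with (h | h) | (h | h) | (h | h)
    exacts [hside hp hq hpq h, hside hq hp hpq.symm h, hside hp hr hpr h,
      hside hr hp hpr.symm h, hside hq hr hqr h, hside hr hq hqr.symm h]
  have : (s.erase x).card + 1 = s.card := Finset.card_erase_add_one hx
  have : t.card + 1 = (s.erase x).card :=
    Finset.card_erase_add_one (Finset.mem_erase.2 ⟨hxy.symm, hy⟩)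
  omega

theorem IsBetweenFree.card_le_four [Fintype α] (hα : Fintype.card α ≤ 4) {s : Finset (α × β)}
    (hs : IsBetweenFree (s : Set (α × β))) : s.card ≤ 4 := by
  by_cases hinj : Set.InjOn Prod.fst (s : Set (α × β))
  · exact (Finset.card_le_card_of_injOn Prod.fst (fun _ _ ↦ Finset.mem_coe.2 (Finset.mem_univ _))
      hinj).trans hα
  · obtain ⟨x, hx, y, hy, hfst, hxy⟩ : ∃ x ∈ s, ∃ y ∈ s, x.1 = y.1 ∧ x ≠ y := by
      simpa [Set.InjOn] using hinj
    exact hs.card_le_four_of_fst_eq hx hy hxy hfst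

end LinearOrder

namespace SimpleGraph

variable {V W : Type*} {G : SimpleGraph V} {H : SimpleGraph W} {u v x y : V}

lemma Walk.dist_add_dist_of_mem_support {p : G.Walk u v} (hp : p.length = G.dist u v)
    (hx : x ∈ p.support) : G.dist u x + G.dist x v = G.dist u v := by
  classical
  have htake := length_eq_dist_of_subwalk hp (isSubwalk_of_append_left (p.take_spec hx).symm)
  have hdrop := length_eq_dist_of_subwalk hp (isSubwalk_of_append_right (p.take_spec hx).symm)
  rw [← htake, ← hdrop, ← hp, ← Walk.length_append, p.take_spec hx]

lemma Walk.dist_eq_natDist_of_mem_support {p : G.Walk u v} (hp : p.length = G.dist u v)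
    (hx : x ∈ p.support) (hy : y ∈ p.support) :
    G.dist x y = Nat.dist (G.dist u x) (G.dist u y) := by
  classical
  have hux := p.dist_add_dist_of_mem_support hp hx
  have huy := p.dist_add_dist_of_mem_support hp hy
  have htake := length_eq_dist_of_subwalk hp (isSubwalk_of_append_left (p.take_spec hx).symm)
  have hdrop := length_eq_dist_of_subwalk hp (isSubwalk_of_append_right (p.take_spec hx).symm)
  rw [← p.take_spec hx, Walk.mem_support_append_iff] at hy
  rcases hy with hy | hy
  · have := (p.takeUntil x hx).dist_add_dist_of_mem_support htake hy
    have hyx : G.dist y x = G.dist x y := dist_comm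
    unfold Nat.dist
    omega
  · have := (p.dropUntil x hx).dist_add_dist_of_mem_support hdrop hy
    unfold Nat.dist
    omega

theorem dist_boxProd (hG : G.Preconnected) (hH : H.Preconnected) (x y : V × W) :
    (G □ H).dist x y = G.dist x.1 y.1 + H.dist x.2 y.2 := by
  have h := edist_boxProd (G := G) (H := H) x y
  rw [← (hG.boxProd hH x y).coe_dist_eq_edist, ← (hG _ _).coe_dist_eq_edist,
    ← (hH _ _).coe_dist_eq_edist] at h
  exact_mod_cast h

lemma natDist_le_length_of_pathGraph_walk {n : ℕ} {a b : Fin n} (w : (pathGraph n).Walk a b) :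
    Nat.dist a b ≤ w.length := by
  induction w with
  | nil => simp
  | cons h _ ih =>
    rw [pathGraph_adj] at h
    rw [Walk.length_cons]
    unfold Nat.dist at *
    omega

lemma pathGraph_dist_le_sub {n : ℕ} {a b : Fin n} (hab : a ≤ b) :
    (pathGraph n).dist a b ≤ b - a := by
  obtain ⟨k, hk⟩ : ∃ k, (b : ℕ) = a + k := ⟨b - a, by omega⟩
  induction k generalizing b with
  | zero => simp [Fin.ext (a := b) (b := a) hk]
  | succ k ih =>
    let b' : Fin n := ⟨a + k, by omega⟩
    have hadj : (pathGraph n).Adj b' b := by rw [pathGraph_adj]; simp [b']; omega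
    calc (pathGraph n).dist a b ≤ (pathGraph n).dist a b' + (pathGraph n).dist b' b :=
          hadj.reachable.dist_triangle_right a
      _ ≤ (b' - a) + 1 := by
          gcongr
          · exact ih (Fin.le_iff_val_le_val.2 (by simp [b'])) rfl
          · exact (dist_eq_one_iff_adj.2 hadj).le
      _ = b - a := by simp [b']; omega

theorem pathGraph_dist {n : ℕ} (a b : Fin n) : (pathGraph n).dist a b = Nat.dist a b := by
  obtain ⟨w, hw⟩ := (pathGraph_preconnected n a b).exists_walk_length_eq_dist
  refine le_antisymm ?_ (hw ▸ natDist_le_length_of_pathGraph_walk w)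
  rcases le_total a b with hab | hba
  · exact (pathGraph_dist_le_sub hab).trans (by unfold Nat.dist; omega)
  · rw [dist_comm]
    exact (pathGraph_dist_le_sub hba).trans (by unfold Nat.dist; omega)

end SimpleGraph

open SimpleGraph

theorem isGenPosSet_iff {V : Type*} {G : SimpleGraph V} (hG : G.Preconnected) {S : Set V} :
    IsGenPosSet G S ↔ ∀ x ∈ S, ∀ y ∈ S, ∀ z ∈ S,
      G.dist x y + G.dist y z = G.dist x z → x = y ∨ y = z ∨ x = z := by
  constructor
  · intro h x hx y hy z hz hxyz
    obtain ⟨p, hp⟩ := (hG x y).exists_walk_length_eq_dist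
    obtain ⟨q, hq⟩ := (hG y z).exists_walk_length_eq_dist
    have hpq : (p.append q).length = G.dist x z := by rw [Walk.length_append, hp, hq, hxyz]
    exact h (p.append q) ((p.append q).isPath_of_length_eq_dist hpq) hpq x y z hx hy hz
      (Walk.start_mem_support _) (by simp) (Walk.end_mem_support _)
  · intro h u v p _ hp x y z hx hy hz hxp hyp hzp
    have hd {a b : V} (ha : a ∈ p.support) (hb : b ∈ p.support) :
        G.dist a b = Nat.dist (G.dist u a) (G.dist u b) :=
      p.dist_eq_natDist_of_mem_support hp ha hb
    rcases mem_uIcc_or_mem_uIcc_or_mem_uIcc (G.dist u x) (G.dist u y) (G.dist u z)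
      with hm | hm | hm
    · exact h x hx y hy z hz
        (by rw [hd hxp hyp, hd hyp hzp, hd hxp hzp, Nat.dist_add_dist_eq_iff]; exact hm)
    · have := h y hy x hx z hz
        (by rw [hd hyp hxp, hd hxp hzp, hd hyp hzp, Nat.dist_add_dist_eq_iff]; exact hm)
      tauto
    · have := h x hx z hz y hy
        (by rw [hd hxp hzp, hd hzp hyp, hd hxp hyp, Nat.dist_add_dist_eq_iff]; exact hm)
      tauto

theorem pathGraph_boxProd_dist_add_dist_eq_iff {m n : ℕ} {x y z : Fin m × Fin n} :
    (pathGraph m □ pathGraph n).dist x y + (pathGraph m □ pathGraph n).dist y z =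
      (pathGraph m □ pathGraph n).dist x z ↔ y ∈ Set.uIcc x z := by
  have hfin {k : ℕ} (a b c : Fin k) :
      b ∈ Set.uIcc a c ↔ Nat.dist a b + Nat.dist b c = Nat.dist a c := by
    simp only [Nat.dist_add_dist_eq_iff, Set.mem_uIcc, Fin.le_iff_val_le_val]
  have h₁ := Nat.dist.triangle_inequality x.1 y.1 z.1
  have h₂ := Nat.dist.triangle_inequality x.2 y.2 z.2
  rw [Set.uIcc_prod_eq, Set.mem_prod, hfin, hfin]
  simp only [dist_boxProd (pathGraph_preconnected m) (pathGraph_preconnected n), pathGraph_dist]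
  omega

theorem isGenPosSet_pathGraph_boxProd_iff {m n : ℕ} {S : Set (Fin m × Fin n)} :
    IsGenPosSet (pathGraph m □ pathGraph n) S ↔ IsBetweenFree S := by
  simp only [isGenPosSet_iff ((pathGraph_preconnected m).boxProd (pathGraph_preconnected n)),
    pathGraph_boxProd_dist_add_dist_eq_iff, IsBetweenFree]

theorem lt_of_gpColorable_pathGraph_four_boxProd {n k : ℕ} (hn : 0 < n)
    (h : GpColorable (pathGraph 4 □ pathGraph n) k) : n < k := by
  classical
  obtain ⟨c, hc⟩ := h
  let colourClass (i : Fin k) : Finset (Fin 4 × Fin n) := Finset.univ.filter (c · = i)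
  have hfree (i : Fin k) : IsBetweenFree (colourClass i : Set (Fin 4 × Fin n)) := by
    simpa [colourClass, ← isGenPosSet_pathGraph_boxProd_iff] using hc i
  let corner : Fin 4 × Fin n := (0, ⟨0, hn⟩)
  have hsum : ∑ i, (colourClass i).card = 4 * n := by
    rw [← Finset.card_eq_sum_card_fiberwise (fun x _ ↦ Finset.mem_univ (c x))]
    simp
  have : ∑ i, (colourClass i).card < ∑ _i : Fin k, 4 :=
    Finset.sum_lt_sum (fun i _ ↦ (hfree i).card_le_four (by simp))
      ⟨c corner, Finset.mem_univ _, Nat.lt_of_le_of_lt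
        ((hfree _).card_le_three_of_mem_lowerBounds (Finset.mem_filter.2 ⟨Finset.mem_univ _, rfl⟩)
          fun v _ ↦ ⟨Fin.zero_le v.1, Nat.zero_le v.2⟩) (by norm_num)⟩
  simp only [Finset.sum_const, Finset.card_univ, Fintype.card_fin, smul_eq_mul] at this
  omega

/-- Row `r` is coloured by `j ↦ j + δ r (mod n + 1)` with `δ = (0, -2, 1, -1)`. -/
def gridColour (n : ℕ) : ℕ → ℕ → ℕ
  | 0, j => j
  | 1, j => if 2 ≤ j then j - 2 else j + n - 1
  | 2, j => j + 1
  | _, j => if 1 ≤ j then j - 1 else n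

section gridColour

variable {n : ℕ}

lemma gridColour_lt {r j : ℕ} (hj : j < n) : gridColour n r j < n + 1 := by
  unfold gridColour
  split <;> (try split_ifs) <;> omega

lemma gridColour_injOn (r : ℕ) : Set.InjOn (gridColour n r) (Set.Iio n) := by
  intro j (hj : j < n) j' (hj' : j' < n) h
  unfold gridColour at h
  split at h <;> (try split_ifs at h) <;> omega

lemma gridColour_notMem_uIcc (hn : 3 ≤ n) {r₁ r₂ r₃ j₁ j₂ j₃ : ℕ} (h₁₂ : r₁ < r₂)
    (h₂₃ : r₂ < r₃) (h₃ : r₃ < 4) (hj₁ : j₁ < n) (hj₃ : j₃ < n)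
    (e₁₂ : gridColour n r₁ j₁ = gridColour n r₂ j₂)
    (e₂₃ : gridColour n r₂ j₂ = gridColour n r₃ j₃) :
    j₂ ∉ Set.uIcc j₁ j₃ := by
  rw [Set.mem_uIcc]
  interval_cases r₃ <;> interval_cases r₂ <;> interval_cases r₁ <;>
    simp only [gridColour] at e₁₂ e₂₃ <;> split_ifs at e₁₂ e₂₃ <;> omega

lemma isBetweenFree_gridColour_class (hn : 3 ≤ n) (i : ℕ) :
    IsBetweenFree {v : Fin 4 × Fin n | gridColour n v.1 v.2 = i} := by
  have hrow {a b : Fin 4 × Fin n} (ha : gridColour n a.1 a.2 = i)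
      (hb : gridColour n b.1 b.2 = i) (hab : a ≠ b) : (a.1 : ℕ) ≠ b.1 := fun h ↦ hab <|
    Prod.ext (Fin.ext h) (Fin.ext (gridColour_injOn _ a.2.isLt b.2.isLt (h ▸ ha.trans hb.symm)))
  rintro x (hx : gridColour n x.1 x.2 = i) y (hy : gridColour n y.1 y.2 = i)
    z (hz : gridColour n z.1 z.2 = i) hxyz
  by_contra! hne
  obtain ⟨hxy, hyz, -⟩ := hne
  have rxy := hrow hx hy hxy
  have ryz := hrow hy hz hyz
  simp only [Set.uIcc_prod_eq, Set.mem_prod, Set.mem_uIcc, Fin.le_iff_val_le_val] at hxyz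
  obtain ⟨h₁ | h₁, h₂⟩ := hxyz
  · exact gridColour_notMem_uIcc hn (by omega) (by omega) z.1.isLt x.2.isLt z.2.isLt
      (hx.trans hy.symm) (hy.trans hz.symm) (Set.mem_uIcc.2 h₂)
  · exact gridColour_notMem_uIcc hn (by omega) (by omega) x.1.isLt z.2.isLt x.2.isLt
      (hz.trans hy.symm) (hy.trans hx.symm) (Set.mem_uIcc.2 h₂.symm)

theorem gpColorable_pathGraph_four_boxProd (hn : 3 ≤ n) :
    GpColorable (pathGraph 4 □ pathGraph n) (n + 1) := by
  refine ⟨fun v ↦ ⟨gridColour n v.1 v.2, gridColour_lt v.2.isLt⟩, fun i ↦ ?_⟩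
  rw [isGenPosSet_pathGraph_boxProd_iff]
  simpa only [Fin.ext_iff] using isBetweenFree_gridColour_class hn i

end gridColour

/-- For `n ≥ 4`, `χ_gp(P₄ □ P_n) = n + 1`. -/
theorem gpChromatic_P4_boxProd_Pn (n : ℕ) (hn : 4 ≤ n) :
    gpChromatic (pathGraph 4 □ pathGraph n) = n + 1 := by
  have hcol : GpColorable (pathGraph 4 □ pathGraph n) (n + 1) :=
    gpColorable_pathGraph_four_boxProd (by omega)
  exact le_antisymm (Nat.sInf_le hcol)
    (le_csInf ⟨_, hcol⟩ fun k hk ↦ lt_of_gpColorable_pathGraph_four_boxProd (by omega) hk)
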